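/- arXiv:1705.04560 — 2 statements merged into one kernel-verified Lean document; each statement's English description precedes it below -/
import Mathlib

section
/- If V is a Sidon space of dimension k in F_{q^n} and q^n − q^k > 2(q^{4k+4} − 1)/(q − 1), then there exists v ∈ F_{q^n} \ V such that V + span{v} is a Sidon space of dimension k+1. -/
open Polynomial

/-- A subspace `V` of a field extension `K / F` is a *Sidon space* if for all nonzero
`a, b, c, d ∈ V`, `a * b = c * d` implies `{aF, bF} = {cF, dF}`. -/
def IsSidon {F K : Type*} [Field F] [Field K] [Algebra F K] (V : Submodule F K) : Prop :=
  ∀ a ∈ V, ∀ b ∈ V, ∀ c ∈ V, ∀ d ∈ V,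
    a ≠ 0 → b ≠ 0 → c ≠ 0 → d ≠ 0 → a * b = c * d →
    ({Submodule.span F {a}, Submodule.span F {b}} : Set (Submodule F K)) =
      {Submodule.span F {c}, Submodule.span F {d}}

/-!
Write the elements of `V ⊕ F v` as `a + α v` with `a ∈ V`, `α ∈ F`. A relation
`(a + α v)(b + β v) = (c + γ v)(d + δ v)` says that `v` is a root of the quadratic
`(a + α X)(b + β X) - (c + γ X)(d + δ X) ∈ K[X]`. If this polynomial vanishes identically and,
say, `α ≠ 0`, comparing coefficients gives `(γ a - α c)(δ a - α d) = 0`, which pairs the two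
factors on each side up to scalars in `F`; if `α = β = γ = δ = 0` the Sidon property of `V` applies.

The polynomial is homogeneous of degree two in the tuple `(a, b, c, d, α, β, γ, δ) ∈ V⁴ × F⁴`,
so its roots only depend on the point of the projective space `ℙ(V⁴ × F⁴)`, which has
`(q^(4k+4) - 1)/(q - 1)` points. The nonzero polynomials therefore have fewer than `q^n - q^k`
roots in total, and some `v ∉ V` avoids all of them.
-/

open Submodule

section SpanPair

variable {F K : Type*} [Field F] [Field K] [Algebra F K] {a b c d v : K} {α β γ δ : F}

theorem span_eq_and_span_eq_of_smul_eq (hα : α ≠ 0) (hc : c + γ • v ≠ 0)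
    (h₂ : α * β = γ * δ) (h₁ : β • a + α • b = δ • c + γ • d) (hac : γ • a = α • c) :
    span F {c + γ • v} = span F {a + α • v} ∧ span F {b + β • v} = span F {d + δ • v} := by
  obtain ⟨μ, rfl⟩ : ∃ μ, γ = μ * α := ⟨γ / α, (div_mul_cancel₀ γ hα).symm⟩
  obtain rfl : c = μ • a := smul_right_injective K hα (by linear_combination (norm := module) -hac)
  obtain rfl : β = μ * δ := mul_left_cancel₀ hα (by linear_combination h₂)
  obtain rfl : b = μ • d := smul_right_injective K hα (by linear_combination (norm := module) h₁)
  have hμ : μ ≠ 0 := by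
    rintro rfl
    simp at hc
  rw [show μ • a + (μ * α) • v = μ • (a + α • v) by module,
    show μ • d + (μ * δ) • v = μ • (d + δ • v) by module,
    span_singleton_smul_eq hμ.isUnit, span_singleton_smul_eq hμ.isUnit]
  exact ⟨rfl, rfl⟩

theorem span_pair_eq_of_left_ne_zero (hα : α ≠ 0) (hc : c + γ • v ≠ 0) (hd : d + δ • v ≠ 0)
    (h₂ : α * β = γ * δ) (h₁ : β • a + α • b = δ • c + γ • d) (h₀ : a * b = c * d) :
    ({span F {a + α • v}, span F {b + β • v}} : Set (Submodule F K)) =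
      {span F {c + γ • v}, span F {d + δ • v}} := by
  have h₂' := congrArg (algebraMap F K) h₂
  simp only [map_mul] at h₂'
  have hfactor : (γ • a - α • c) * (δ • a - α • d) = 0 := by
    simp only [Algebra.smul_def] at h₁ ⊢
    linear_combination (-a ^ 2) * h₂' + (algebraMap F K α * a) * h₁ - (algebraMap F K α) ^ 2 * h₀
  rcases mul_eq_zero.1 hfactor with hac | had
  · obtain ⟨hca, hbd⟩ := span_eq_and_span_eq_of_smul_eq hα hc h₂ h₁ (sub_eq_zero.1 hac)
    rw [hca, hbd]
  · obtain ⟨hda, hbc⟩ := span_eq_and_span_eq_of_smul_eq hα hd (h₂.trans (mul_comm γ δ))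
      (h₁.trans (add_comm _ _)) (sub_eq_zero.1 had)
    rw [hda, hbc, Set.pair_comm]

theorem span_pair_eq_of_ne_zero (hαβ : α ≠ 0 ∨ β ≠ 0) (hc : c + γ • v ≠ 0) (hd : d + δ • v ≠ 0)
    (h₂ : α * β = γ * δ) (h₁ : β • a + α • b = δ • c + γ • d) (h₀ : a * b = c * d) :
    ({span F {a + α • v}, span F {b + β • v}} : Set (Submodule F K)) =
      {span F {c + γ • v}, span F {d + δ • v}} := by
  rcases hαβ with hα | hβ
  · exact span_pair_eq_of_left_ne_zero hα hc hd h₂ h₁ h₀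
  · rw [Set.pair_comm]
    exact span_pair_eq_of_left_ne_zero hβ hc hd ((mul_comm β α).trans h₂)
      ((add_comm _ _).trans h₁) ((mul_comm b a).trans h₀)

theorem IsSidon.span_pair_eq {V : Submodule F K} (hV : IsSidon V)
    (ha : a ∈ V) (hb : b ∈ V) (hc : c ∈ V) (hd : d ∈ V)
    (ha₀ : a + α • v ≠ 0) (hb₀ : b + β • v ≠ 0) (hc₀ : c + γ • v ≠ 0) (hd₀ : d + δ • v ≠ 0)
    (h₂ : α * β = γ * δ) (h₁ : β • a + α • b = δ • c + γ • d) (h₀ : a * b = c * d) :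
    ({span F {a + α • v}, span F {b + β • v}} : Set (Submodule F K)) =
      {span F {c + γ • v}, span F {d + δ • v}} := by
  by_cases hαβ : α ≠ 0 ∨ β ≠ 0
  · exact span_pair_eq_of_ne_zero hαβ hc₀ hd₀ h₂ h₁ h₀
  by_cases hγδ : γ ≠ 0 ∨ δ ≠ 0
  · exact (span_pair_eq_of_ne_zero hγδ ha₀ hb₀ h₂.symm h₁.symm h₀.symm).symm
  push Not at hαβ hγδ
  obtain ⟨rfl, rfl⟩ := hαβ
  obtain ⟨rfl, rfl⟩ := hγδ
  simp only [zero_smul, add_zero] at ha₀ hb₀ hc₀ hd₀ ⊢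
  exact hV a ha b hb c hc d hd ha₀ hb₀ hc₀ hd₀ h₀

end SpanPair

section Extension

variable {F K : Type*} [Field F] [Field K] [Algebra F K]

theorem IsSidon.sup_span_singleton {V : Submodule F K} (hV : IsSidon V) {v : K}
    (hv : ∀ a ∈ V, ∀ b ∈ V, ∀ c ∈ V, ∀ d ∈ V, ∀ α β γ δ : F,
      (a + α • v) * (b + β • v) = (c + γ • v) * (d + δ • v) →
        α * β = γ * δ ∧ β • a + α • b = δ • c + γ • d ∧ a * b = c * d) :
    IsSidon (V ⊔ span F {v}) := by
  have mem_sup_iff (x : K) : x ∈ V ⊔ span F {v} ↔ ∃ a ∈ V, ∃ α : F, a + α • v = x := by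
    simp only [mem_sup, mem_span_singleton, exists_exists_eq_and]
  intro x hx y hy z hz w hw hx₀ hy₀ hz₀ hw₀ hxy
  obtain ⟨a, ha, α, rfl⟩ := (mem_sup_iff x).1 hx
  obtain ⟨b, hb, β, rfl⟩ := (mem_sup_iff y).1 hy
  obtain ⟨c, hc, γ, rfl⟩ := (mem_sup_iff z).1 hz
  obtain ⟨d, hd, δ, rfl⟩ := (mem_sup_iff w).1 hw
  obtain ⟨h₂, h₁, h₀⟩ := hv a ha b hb c hc d hd α β γ δ hxy
  exact hV.span_pair_eq ha hb hc hd hx₀ hy₀ hz₀ hw₀ h₂ h₁ h₀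

end Extension

section Polynomials

variable {F K : Type*} [Field F] [Field K] [Algebra F K]

noncomputable def affinePoly (a : K) (α : F) : K[X] := C a + C (algebraMap F K α) * X

theorem eval_affinePoly (a v : K) (α : F) : (affinePoly a α).eval v = a + α • v := by
  simp [affinePoly, Algebra.smul_def]

theorem affinePoly_smul (l : F) (a : K) (α : F) :
    affinePoly (l • a) (l * α) = C (algebraMap F K l) * affinePoly a α := by
  simp only [affinePoly, Algebra.smul_def, map_mul]
  ring

theorem affinePoly_mul_affinePoly (a b : K) (α β : F) :
    affinePoly a α * affinePoly b β =
      C (algebraMap F K (α * β)) * X ^ 2 + C (β • a + α • b) * X + C (a * b) := by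
  simp only [affinePoly, Algebra.smul_def, map_mul, map_add]
  ring

theorem natDegree_affinePoly_mul_affinePoly_le (a b : K) (α β : F) :
    (affinePoly a α * affinePoly b β).natDegree ≤ 2 := by
  rw [affinePoly_mul_affinePoly]
  exact natDegree_quadratic_le

theorem eq_of_affinePoly_mul_eq {a b c d : K} {α β γ δ : F}
    (h : affinePoly a α * affinePoly b β = affinePoly c γ * affinePoly d δ) :
    α * β = γ * δ ∧ β • a + α • b = δ • c + γ • d ∧ a * b = c * d := by
  rw [affinePoly_mul_affinePoly, affinePoly_mul_affinePoly] at h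
  have h₂ := congrArg (coeff · 2) h
  have h₁ := congrArg (coeff · 1) h
  have h₀ := congrArg (coeff · 0) h
  simp [coeff_X, coeff_C, -map_mul] at h₂ h₁ h₀
  exact ⟨h₂, h₁, h₀⟩

variable (V : Submodule F K)

noncomputable def sidonPoly (t : Fin 4 → V × F) : K[X] :=
  let p i := affinePoly ((t i).1 : K) (t i).2
  p 0 * p 1 - p 2 * p 3

theorem natDegree_sidonPoly_le (t : Fin 4 → V × F) : (sidonPoly V t).natDegree ≤ 2 :=
  (natDegree_sub_le _ _).trans <|
    max_le (natDegree_affinePoly_mul_affinePoly_le _ _ _ _)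
      (natDegree_affinePoly_mul_affinePoly_le _ _ _ _)

theorem sidonPoly_zero : sidonPoly V 0 = 0 := by
  simp [sidonPoly]

theorem sidonPoly_smul (l : F) (t : Fin 4 → V × F) :
    sidonPoly V (l • t) = C (algebraMap F K l ^ 2) * sidonPoly V t := by
  simp only [sidonPoly, Pi.smul_apply, Prod.smul_fst, Prod.smul_snd, Submodule.coe_smul,
    smul_eq_mul, affinePoly_smul, map_pow]
  ring

theorem roots_sidonPoly_smul {l : F} (hl : l ≠ 0) (t : Fin 4 → V × F) :
    (sidonPoly V (l • t)).roots = (sidonPoly V t).roots := by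
  rw [sidonPoly_smul, roots_C_mul _ (pow_ne_zero 2 ((_root_.map_ne_zero _).2 hl))]

variable {V}

theorem IsSidon.sup_span_singleton_of_forall_isRoot (hV : IsSidon V) {v : K}
    (hv : ∀ t, (sidonPoly V t).IsRoot v → sidonPoly V t = 0) : IsSidon (V ⊔ span F {v}) := by
  refine hV.sup_span_singleton fun a ha b hb c hc d hd α β γ δ h => eq_of_affinePoly_mul_eq ?_
  refine sub_eq_zero.1 (hv ![(⟨a, ha⟩, α), (⟨b, hb⟩, β), (⟨c, hc⟩, γ), (⟨d, hd⟩, δ)] ?_)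
  simp [sidonPoly, IsRoot, eval_affinePoly, h]

end Polynomials

open scoped LinearAlgebra.Projectivization in
theorem exists_notMem_forall_eq_zero_of_isRoot {F K E : Type*} [Field F] [Finite F]
    [Field K] [Finite K] [AddCommGroup E] [Module F E] [Finite E] (P : E → K[X]) {m : ℕ}
    (hdeg : ∀ t, (P t).natDegree ≤ m) (hzero : P 0 = 0)
    (hsmul : ∀ l : F, l ≠ 0 → ∀ t, (P (l • t)).roots = (P t).roots)
    (S : Set K) (hcard : m * (Nat.card E - 1) < (Nat.card F - 1) * (Nat.card K - Nat.card S)) :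
    ∃ v ∉ S, ∀ t, (P t).IsRoot v → P t = 0 := by
  classical
  have := Fintype.ofFinite K
  have := Fintype.ofFinite (ℙ F E)
  set bad : Finset K := Finset.univ.biUnion fun p : ℙ F E => (P p.rep).roots.toFinset
  have mem_bad {t : E} {v : K} (hroot : (P t).IsRoot v) (hP : P t ≠ 0) : v ∈ bad := by
    have ht : t ≠ 0 := by rintro rfl; exact hP hzero
    obtain ⟨u, hu⟩ := Projectivization.exists_smul_eq_mk_rep F t ht
    refine Finset.mem_biUnion.2 ⟨Projectivization.mk F t ht, Finset.mem_univ _, ?_⟩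
    rw [← hu, Units.smul_def, hsmul _ u.ne_zero, Multiset.mem_toFinset, mem_roots hP]
    exact hroot
  have card_bad : (Nat.card F - 1) * bad.card ≤ m * (Nat.card E - 1) := by
    have : bad.card ≤ m * Nat.card (ℙ F E) :=
      calc bad.card ≤ ∑ p : ℙ F E, ((P p.rep).roots.toFinset).card := Finset.card_biUnion_le
        _ ≤ ∑ _p : ℙ F E, m := Finset.sum_le_sum fun p _ =>
            (Multiset.toFinset_card_le _).trans ((card_roots' _).trans (hdeg _))
        _ = m * Nat.card (ℙ F E) := by simp [mul_comm, Nat.card_eq_fintype_card]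
    calc (Nat.card F - 1) * bad.card ≤ (Nat.card F - 1) * (m * Nat.card (ℙ F E)) :=
          Nat.mul_le_mul_left _ this
      _ = m * (Nat.card E - 1) := by rw [Projectivization.card F E]; ring
  by_contra! hall
  have hsub : S.toFinsetᶜ ⊆ bad := fun v hv => by
    obtain ⟨t, hroot, hP⟩ := hall v (by simpa using hv)
    exact mem_bad hroot hP
  have := Finset.card_le_card hsub
  rw [Finset.card_compl, Set.toFinset_card, ← Nat.card_eq_fintype_card,
    ← Nat.card_eq_fintype_card] at this
  have := Nat.mul_le_mul_left (Nat.card F - 1) this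
  omega

theorem stmt8 {F K : Type*} [Field F] [Fintype F] [Field K] [Fintype K] [Algebra F K]
    (q n k : ℕ) (hq : q = Fintype.card F) (hn : Fintype.card K = q ^ n)
    (V : Submodule F K) (hk : Module.finrank F V = k) (hV : IsSidon V)
    (hbig : (q - 1) * (q ^ n - q ^ k) > 2 * (q ^ (4 * k + 4) - 1)) :
    ∃ v : K, v ∉ V ∧ IsSidon (V ⊔ Submodule.span F {v}) ∧
      Module.finrank F ↥(V ⊔ Submodule.span F {v}) = k + 1 := by
  rw [← Nat.card_eq_fintype_card] at hq hn
  have hcardV : Nat.card V = q ^ k := by rw [Module.natCard_eq_pow_finrank (K := F), hk, hq]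
  have hcardE : Nat.card (Fin 4 → V × F) = q ^ (4 * k + 4) := by
    rw [Nat.card_fun, Nat.card_prod, hcardV, ← hq, Nat.card_eq_fintype_card, Fintype.card_fin]
    ring
  obtain ⟨v, hvV, hv⟩ := exists_notMem_forall_eq_zero_of_isRoot (sidonPoly V)
    (natDegree_sidonPoly_le V) (sidonPoly_zero V) (fun _ => roots_sidonPoly_smul V) (V : Set K)
    (by rw [hcardE, ← hq, hn, SetLike.coe_sort_coe, hcardV]; exact hbig)
  exact ⟨v, hvV, hV.sup_span_singleton_of_forall_isRoot hv, by
    rw [finrank_sup_span_singleton hvV, hk]⟩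
end

section
/- Let q be a prime power, k > 0 and r ≥ 2 integers, n = k(r+1), and γ ∈ F_{q^n} a root of an irreducible polynomial of degree r+1 over F_{q^k}. Then V = {u + u^q γ : u ∈ F_{q^k}} is an r-Sidon space of dimension k in F_{q^n}. -/
open Polynomial

/-- A subspace `V` of a field extension `K / F` is an *r-Sidon space* if whenever the
products of two `r`-tuples of nonzero elements of `V` coincide, the corresponding
multisets of one-dimensional subspaces spanned by the entries coincide. -/
def IsRSidon {F K : Type*} [Field F] [Field K] [Algebra F K] (r : ℕ)
    (V : Submodule F K) : Prop :=
  ∀ a b : Fin r → K, (∀ i, a i ∈ V) → (∀ i, a i ≠ 0) →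
    (∀ i, b i ∈ V) → (∀ i, b i ≠ 0) →
    ∏ i, a i = ∏ i, b i →
    (Finset.univ.val.map fun i => Submodule.span F {a i}) =
      (Finset.univ.val.map fun i => Submodule.span F {b i})

/-!
Write `θ(u) = -u / u ^ q`, so that `u + u ^ q γ = u ^ q (γ - θ(u))`. A product of `r` elements
of `V` is then `c · ∏ (γ - θ(uᵢ))`, the value at `γ` of a polynomial of degree `r` over `L`. As
the minimal polynomial of `γ` over `L` has degree `r + 1 > r`, this value determines the
polynomial, hence the multiset of its roots `θ(uᵢ)`. Finally `θ(u) = θ(v)` forces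
`(v / u) ^ q = v / u`, i.e. `v ∈ Fˣ • u`, so `θ(u)` determines the line `F · (u + u ^ q γ)`.
-/

theorem Multiset.map_eq_map_of_factorsThrough {α β γ : Type*} {f : α → β} {g : α → γ}
    (hgf : g.FactorsThrough f) {s t : Multiset α} (hst : s.map f = t.map f) :
    s.map g = t.map g := by
  rcases isEmpty_or_nonempty α with hα | ⟨⟨a⟩⟩
  · simp [Multiset.eq_zero_of_forall_notMem (s := s) isEmptyElim,
      Multiset.eq_zero_of_forall_notMem (s := t) isEmptyElim]
  · have hg : ∀ u : Multiset α, u.map g = (u.map f).map (Function.extend f g fun _ => g a) :=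
      fun u => by
        rw [Multiset.map_map]
        exact Multiset.map_congr rfl fun x _ => (hgf.extend_apply _ x).symm
    rw [hg, hg, hst]

theorem FiniteField.mem_range_algebraMap_of_pow_card_eq {F L : Type*} [Field F] [Fintype F]
    [CommRing L] [IsDomain L] [Algebra F L] {x : L} (hx : x ^ Fintype.card F = x) :
    x ∈ (algebraMap F L).range := by
  have hq : 1 < Fintype.card F := Fintype.one_lt_card
  have hmonic : (X ^ Fintype.card F - X : F[X]).Monic :=
    monic_X_pow_sub (by rw [degree_X]; exact_mod_cast hq)
  have hsplit : (Finset.univ.val.map fun c : F => X - C c).prod = X ^ Fintype.card F - X := by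
    rw [← roots_X_pow_card_sub_X]
    refine prod_multiset_X_sub_C_of_monic_of_roots_card_eq hmonic ?_
    rw [roots_X_pow_card_sub_X, X_pow_card_sub_X_natDegree_eq F hq]; rfl
  have := congrArg (aeval x) hsplit
  simp only [map_multiset_prod, Multiset.map_map, Function.comp_def, map_sub, aeval_X,
    aeval_C, map_pow, hx, sub_self, Multiset.prod_eq_zero_iff, Multiset.mem_map,
    sub_eq_zero] at this
  obtain ⟨c, -, hc⟩ := this
  exact ⟨c, hc.symm⟩

theorem FiniteField.exists_units_smul_eq_of_div_pow_card_eq {F L : Type*} [Field F] [Fintype F]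
    [Field L] [Algebra F L] {x y : L}
    (h : x / x ^ Fintype.card F = y / y ^ Fintype.card F) : ∃ c : Fˣ, c • x = y := by
  have hq : Fintype.card F ≠ 0 := Fintype.card_ne_zero
  have hzero : ∀ z : L, z / z ^ Fintype.card F = 0 ↔ z = 0 := fun z => by
    simp [div_eq_zero_iff, hq]
  by_cases hx : x = 0
  · have hy : y = 0 := (hzero y).1 (h ▸ (hzero x).2 hx)
    exact ⟨1, by rw [one_smul, hx, hy]⟩
  have hy : y ≠ 0 := fun hy => hx <| (hzero x).1 (by rw [h, hy, zero_div])
  have hfix : (y / x) ^ Fintype.card F = y / x := by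
    rw [div_pow, div_eq_div_iff (pow_ne_zero _ hx) hx]
    field_simp at h
    linear_combination h
  obtain ⟨c, hc⟩ := FiniteField.mem_range_algebraMap_of_pow_card_eq hfix
  have hc0 : c ≠ 0 := by rintro rfl; exact div_ne_zero hy hx (by simpa using hc.symm)
  refine ⟨Units.mk0 c hc0, ?_⟩
  rw [Units.smul_def, Units.val_mk0, Algebra.smul_def, hc, div_mul_cancel₀ _ hx]

section MinpolyDegree

variable {L K : Type*} [Field L] [Field K] [Algebra L K]

theorem Polynomial.aeval_C_mul_multiset_prod_X_sub_C (γ : K) (c : L) (s : Multiset L) :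
    aeval γ (C c * (s.map fun a => X - C a).prod) =
      algebraMap L K c * (s.map fun a => γ - algebraMap L K a).prod := by
  simp [map_multiset_prod, Multiset.map_map]

theorem Multiset.eq_of_algebraMap_mul_prod_sub_eq {γ : K} {c d : L} {s t : Multiset L}
    (hc : c ≠ 0) (hd : d ≠ 0) (hs : Multiset.card s < (minpoly L γ).natDegree)
    (ht : Multiset.card t < (minpoly L γ).natDegree)
    (h : algebraMap L K c * (s.map fun a => γ - algebraMap L K a).prod =
      algebraMap L K d * (t.map fun a => γ - algebraMap L K a).prod) : s = t := by
  set P : L[X] := C c * (s.map fun a => X - C a).prod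
  set Q : L[X] := C d * (t.map fun a => X - C a).prod
  have hPQ : P = Q := by
    by_contra hne
    have hmin := natDegree_le_natDegree <| minpoly.degree_le_of_ne_zero L γ (sub_ne_zero.2 hne)
      (by rw [map_sub, aeval_C_mul_multiset_prod_X_sub_C, aeval_C_mul_multiset_prod_X_sub_C, h,
        sub_self])
    have hP : P.natDegree = Multiset.card s := by
      rw [natDegree_C_mul hc, natDegree_multiset_prod_X_sub_C_eq_card]
    have hQ : Q.natDegree = Multiset.card t := by
      rw [natDegree_C_mul hd, natDegree_multiset_prod_X_sub_C_eq_card]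
    have := natDegree_sub_le P Q
    omega
  simpa [P, Q, roots_C_mul, hc, hd, roots_multiset_prod_X_sub_C] using congrArg roots hPQ

end MinpolyDegree

section SidonMap

variable {F L K : Type*} [Field F] [Fintype F] [Field L] [Field K]
  [Algebra F L] [Algebra L K] [Algebra F K] [IsScalarTower F L K]

variable (F L) in
def sidonMap (γ : K) : L →ₗ[F] K :=
  (IsScalarTower.toAlgHom F L K).toLinearMap +
    LinearMap.mulRight F γ ∘ₗ
      ((IsScalarTower.toAlgHom F L K).comp (FiniteField.frobeniusAlgHom F L)).toLinearMap

theorem sidonMap_apply (γ : K) (u : L) :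
    sidonMap F L γ u = algebraMap L K u + algebraMap L K (u ^ Fintype.card F) * γ :=
  rfl

variable (F) in
def sidonRoot (u : L) : L := -(u / u ^ Fintype.card F)

theorem sidonMap_apply_eq_mul (γ : K) (u : L) :
    sidonMap F L γ u =
      algebraMap L K (u ^ Fintype.card F) * (γ - algebraMap L K (sidonRoot F u)) := by
  rcases eq_or_ne u 0 with rfl | hu
  · simp [sidonRoot]
  · have hcancel : u ^ Fintype.card F * (u / u ^ Fintype.card F) = u :=
      mul_div_cancel₀ _ (pow_ne_zero _ hu)
    rw [sidonMap_apply, sidonRoot, map_neg, sub_neg_eq_add, mul_add, ← map_mul, hcancel, add_comm]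

theorem sidonMap_injective {γ : K} (hγ : γ ∉ (algebraMap L K).range) :
    Function.Injective (sidonMap F L γ) := by
  rw [injective_iff_map_eq_zero]
  intro u hu
  rw [sidonMap_apply_eq_mul, mul_eq_zero, sub_eq_zero, map_eq_zero,
    pow_eq_zero_iff Fintype.card_ne_zero] at hu
  exact hu.resolve_right fun h => hγ ⟨_, h.symm⟩

theorem span_sidonMap_eq_of_sidonRoot_eq (γ : K) {x y : L} (h : sidonRoot F x = sidonRoot F y) :
    Submodule.span F {sidonMap F L γ x} = Submodule.span F {sidonMap F L γ y} := by
  obtain ⟨c, rfl⟩ := FiniteField.exists_units_smul_eq_of_div_pow_card_eq (neg_inj.1 h)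
  rw [Units.smul_def, map_smul, ← Units.smul_def, Submodule.span_singleton_group_smul_eq]

theorem prod_sidonMap {ι : Type*} (γ : K) (s : Finset ι) (u : ι → L) :
    ∏ i ∈ s, sidonMap F L γ (u i) = algebraMap L K (∏ i ∈ s, u i ^ Fintype.card F) *
      ((s.val.map fun i => sidonRoot F (u i)).map fun a => γ - algebraMap L K a).prod := by
  simp only [sidonMap_apply_eq_mul, Finset.prod_mul_distrib, map_prod, Multiset.map_map]
  rfl

theorem isRSidon_range_sidonMap {r : ℕ} {γ : K} (hr : r < (minpoly L γ).natDegree) :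
    IsRSidon r (LinearMap.range (sidonMap F L γ)) := by
  intro a b ha ha0 hb hb0 hab
  choose u hau using fun i => LinearMap.mem_range.1 (ha i)
  choose v hbv using fun i => LinearMap.mem_range.1 (hb i)
  obtain rfl : a = fun i => sidonMap F L γ (u i) := funext fun i => (hau i).symm
  obtain rfl : b = fun i => sidonMap F L γ (v i) := funext fun i => (hbv i).symm
  have hu : ∀ i, u i ≠ 0 := fun i h => ha0 i (by simp [h])
  have hv : ∀ i, v i ≠ 0 := fun i h => hb0 i (by simp [h])
  have hroots : (Finset.univ.val.map u).map (sidonRoot F) =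
      (Finset.univ.val.map v).map (sidonRoot F) := by
    have hprod := (prod_sidonMap γ _ u).symm.trans (hab.trans (prod_sidonMap γ _ v))
    rw [Multiset.map_map, Multiset.map_map]
    exact Multiset.eq_of_algebraMap_mul_prod_sub_eq
      (Finset.prod_ne_zero_iff.2 fun i _ => pow_ne_zero _ (hu i))
      (Finset.prod_ne_zero_iff.2 fun i _ => pow_ne_zero _ (hv i))
      (by simpa using hr) (by simpa using hr) hprod
  simpa only [Multiset.map_map, Function.comp_def] using Multiset.map_eq_map_of_factorsThrough
    (fun x y => span_sidonMap_eq_of_sidonRoot_eq (F := F) γ) hroots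

end SidonMap

theorem stmt19_general {F L K : Type*} [Field F] [Fintype F] [Field L] [Field K]
    [Algebra F L] [Algebra L K] [Algebra F K] [IsScalarTower F L K]
    (q k r : ℕ) (hq : q = Fintype.card F) (hr : 2 ≤ r)
    (hkL : Module.finrank F L = k)
    (p : Polynomial L) (hp : Irreducible p) (hdeg : p.natDegree = r + 1)
    (γ : K) (hγ : Polynomial.aeval γ p = 0) :
    ∃ V : Submodule F K,
      (V : Set K) = {x | ∃ u : L, x = algebraMap L K u + algebraMap L K (u ^ q) * γ} ∧
      Module.finrank F V = k ∧ IsRSidon r V := by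
  subst hq
  have hmin : (minpoly L γ).natDegree = r + 1 := by
    rw [← hdeg, minpoly.Irreducible.eq_minpoly hp hγ,
      natDegree_C_mul (leadingCoeff_ne_zero.2 hp.ne_zero)]
  have hγL : γ ∉ (algebraMap L K).range := by
    rw [← minpoly.natDegree_eq_one_iff, hmin]
    omega
  refine ⟨LinearMap.range (sidonMap F L γ), ?_, ?_, isRSidon_range_sidonMap (by omega)⟩
  · ext x
    simp [sidonMap_apply, eq_comm]
  · rw [LinearMap.finrank_range_of_inj (sidonMap_injective hγL), hkL]

theorem stmt19 {F L K : Type*} [Field F] [Fintype F] [Field L] [Field K]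
    [Algebra F L] [Algebra L K] [Algebra F K] [IsScalarTower F L K]
    (q n k r : ℕ) (hq : q = Fintype.card F) (hkpos : 0 < k) (hr : 2 ≤ r)
    (hkL : Module.finrank F L = k) (hn : Module.finrank F K = n)
    (hnk : n = k * (r + 1))
    (p : Polynomial L) (hp : Irreducible p) (hdeg : p.natDegree = r + 1)
    (γ : K) (hγ : Polynomial.aeval γ p = 0) :
    ∃ V : Submodule F K,
      (V : Set K) = {x | ∃ u : L, x = algebraMap L K u + algebraMap L K (u ^ q) * γ} ∧
      Module.finrank F V = k ∧ IsRSidon r V :=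
  stmt19_general q k r hq hr hkL p hp hdeg γ hγ
end
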